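/- Let N be a positive integer with N ≢ 1 (mod 4) and ⌈N/4⌉ ≡ 1 (mod 5). Then every 5D-layout of N lines covers at least ⌈N/4⌉ · 5 + 4 lattice points. -/

import Mathlib

/-- The four directions of Morpion Solitaire. -/
def Dir : Set (ℤ × ℤ) := {(1, 0), (0, 1), (1, 1), (1, -1)}

/-- The line (segment) of length 5 starting at `q` in direction `d`:
the set `{q + t • d : t ∈ {0,1,2,3,4}}`. -/
def seg (q d : ℤ × ℤ) : Set (ℤ × ℤ) := {p | ∃ t : ℕ, t ≤ 4 ∧ p = q + (t : ℤ) • d}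

/-- The initial configuration of 36 crosses. -/
def S0 : Set (ℤ × ℤ) := {p |
  ((p.2 = 0 ∨ p.2 = 9) ∧ 3 ≤ p.1 ∧ p.1 ≤ 6) ∨
  ((p.1 = 0 ∨ p.1 = 9) ∧ 3 ≤ p.2 ∧ p.2 ≤ 6) ∨
  ((p.1 = 3 ∨ p.1 = 6) ∧ ((0 ≤ p.2 ∧ p.2 ≤ 3) ∨ (6 ≤ p.2 ∧ p.2 ≤ 9))) ∨
  ((p.2 = 3 ∨ p.2 = 6) ∧ ((0 ≤ p.1 ∧ p.1 ≤ 3) ∨ (6 ≤ p.1 ∧ p.1 ≤ 9)))}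

/-- A play of Morpion Solitaire 5D of length `N`: crosses `p i`, and lines
`seg (q i) (d i)` in directions `d i ∈ Dir`, subject to the rules of 5D.
(Index `i : Fin N` corresponds to move `i + 1`.) -/
structure Play (N : ℕ) where
  p : Fin N → ℤ × ℤ
  q : Fin N → ℤ × ℤ
  d : Fin N → ℤ × ℤ
  d_mem : ∀ i, d i ∈ Dir
  /-- rule (1): the new cross is placed on an empty point -/
  p_not_S0 : ∀ i, p i ∉ S0
  p_new : ∀ i j : Fin N, j < i → p j ≠ p i
  /-- rule (2): the new line passes through the new cross -/
  p_mem : ∀ i, p i ∈ seg (q i) (d i)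
  /-- rule (3): the new line passes only through existing crosses -/
  seg_sub : ∀ i, seg (q i) (d i) ⊆ S0 ∪ {x | ∃ j : Fin N, j ≤ i ∧ p j = x}
  /-- rule (4): two lines in the same direction are disjoint -/
  disj : ∀ i j : Fin N, j < i → d j = d i → seg (q i) (d i) ∩ seg (q j) (d j) = ∅

/-- A 5D-layout of `N` lines: `N` pairwise distinct lines, each in a direction
from `Dir`, such that two distinct lines in the same direction are disjoint. -/
structure Layout (N : ℕ) where
  q : Fin N → ℤ × ℤ
  d : Fin N → ℤ × ℤ
  d_mem : ∀ i, d i ∈ Dir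
  distinct : ∀ i j : Fin N, i ≠ j → seg (q i) (d i) ≠ seg (q j) (d j)
  disj : ∀ i j : Fin N, i ≠ j → d i = d j → seg (q i) (d i) ∩ seg (q j) (d j) = ∅

/-- The set of lattice points covered by the lines of a layout. -/
def Layout.covered {N : ℕ} (L : Layout N) : Set (ℤ × ℤ) := ⋃ i, seg (L.q i) (L.d i)

/-! If some direction carries at least `k + 1` lines, `k = ⌈N/4⌉`, their disjoint segments
already cover `5k + 5` points. Otherwise, as `N ≥ 4k - 2`, two directions `d ≠ w` carry exactly
`k` lines each. Colour the plane by the cross product with `w` modulo 5: it is constant along the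
`w`-lines, and since distinct directions of `Dir` have cross product `±1` or `±2`, every `d`-line
meets every colour. So each colour class of the covered set has at least `k` points, while the
`w`-lines contribute a multiple of 5 to each class and `5k` in total. Were at most `5k + 3` points
covered, each class would have at most `k + 3` points, so (as `k ≡ 1 mod 5`) each `w`-contribution
would be at most `k - 1`, at most `5k - 5` in total. -/

open Finset

def segFinset (q d : ℤ × ℤ) : Finset (ℤ × ℤ) := (range 5).image fun t : ℕ => q + (t : ℤ) • d

@[simp]
theorem coe_segFinset (q d : ℤ × ℤ) : (segFinset q d : Set (ℤ × ℤ)) = seg q d := by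
  ext p
  simp only [segFinset, seg, coe_image, coe_range, Set.mem_image, Set.mem_Iio]
  constructor
  · rintro ⟨t, ht, rfl⟩; exact ⟨t, by omega, rfl⟩
  · rintro ⟨t, ht, rfl⟩; exact ⟨t, by omega, rfl⟩

theorem card_segFinset (q : ℤ × ℤ) {d : ℤ × ℤ} (hd : d ≠ 0) : #(segFinset q d) = 5 := by
  refine (card_image_of_injective _ fun a b h => ?_).trans (card_range 5)
  exact Nat.cast_injective (smul_left_injective ℤ hd (add_left_cancel h))

theorem ne_zero_of_mem_Dir {d : ℤ × ℤ} (hd : d ∈ Dir) : d ≠ 0 := by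
  simp only [Dir, Set.mem_insert_iff, Set.mem_singleton_iff] at hd
  rcases hd with rfl | rfl | rfl | rfl <;> decide

def dirs : Finset (ℤ × ℤ) := {(1, 0), (0, 1), (1, 1), (1, -1)}

theorem mem_dirs {d : ℤ × ℤ} : d ∈ dirs ↔ d ∈ Dir := by
  simp [dirs, Dir]

theorem card_dirs : #dirs = 4 := rfl

def cross (w p : ℤ × ℤ) : ℤ := w.1 * p.2 - w.2 * p.1

theorem cross_add_smul (w q d : ℤ × ℤ) (t : ℤ) :
    cross w (q + t • d) = cross w q + t * cross w d := by
  simp only [cross, Prod.fst_add, Prod.snd_add, Prod.smul_fst, Prod.smul_snd, smul_eq_mul]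
  ring

theorem cross_self_eq_of_mem_segFinset {q w p : ℤ × ℤ} (hp : p ∈ segFinset q w) :
    cross w p = cross w q := by
  obtain ⟨t, -, rfl⟩ := mem_image.1 hp
  rw [cross_add_smul]
  simp [cross, mul_comm]

theorem cross_ne_zero_mod_five {d w : ℤ × ℤ} (hd : d ∈ Dir) (hw : w ∈ Dir) (hdw : d ≠ w) :
    (cross w d : ZMod 5) ≠ 0 := by
  simp only [Dir, Set.mem_insert_iff, Set.mem_singleton_iff] at hd hw
  rcases hd with rfl | rfl | rfl | rfl <;> rcases hw with rfl | rfl | rfl | rfl <;>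
    first | exact absurd rfl hdw | decide

theorem exists_mem_segFinset_cross_eq (q : ℤ × ℤ) {w d : ℤ × ℤ} (h : (cross w d : ZMod 5) ≠ 0)
    (c : ZMod 5) : ∃ p ∈ segFinset q d, (cross w p : ZMod 5) = c := by
  have : Fact (Nat.Prime 5) := ⟨by norm_num⟩
  set t : ZMod 5 := (c - cross w q) * (cross w d : ZMod 5)⁻¹
  refine ⟨q + (t.val : ℤ) • d, mem_image_of_mem _ (mem_range.2 t.val_lt), ?_⟩
  rw [cross_add_smul]
  push_cast
  rw [ZMod.natCast_zmod_val, mul_assoc, inv_mul_cancel₀ h, mul_one, add_sub_cancel]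

theorem five_mul_add_four_le_sum {ι : Type*} [Fintype ι] (hι : Fintype.card ι = 5) {k : ℕ}
    (hk : k % 5 = 1) (u b : ι → ℕ) (hku : ∀ c, k ≤ u c) (hbu : ∀ c, b c ≤ u c)
    (hb : ∀ c, 5 ∣ b c) (hbsum : ∑ c, b c = 5 * k) : 5 * k + 4 ≤ ∑ c, u c := by
  classical
  by_contra! hlt
  have hu_le : ∀ c, u c ≤ k + 3 := by
    intro c
    have hrest : 4 * k ≤ ∑ c' ∈ univ.erase c, u c' := by
      simpa [card_erase_of_mem, hι] using card_nsmul_le_sum (univ.erase c) u k fun c' _ => hku c'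
    have := sum_erase_add univ u (mem_univ c)
    omega
  have hb_le : ∀ c, b c ≤ k - 1 := by
    intro c
    obtain ⟨m, hm⟩ := hb c
    have := hbu c
    have := hu_le c
    omega
  have : ∑ c, b c ≤ 5 * (k - 1) := by
    simpa [hι] using sum_le_card_nsmul univ b (k - 1) fun c _ => hb_le c
  omega

theorem exists_ne_eq_of_le_of_sum {α : Type*} (s : Finset α) (f : α → ℕ) (k : ℕ)
    (hf : ∀ a ∈ s, f a ≤ k) (hsum : #s * k + 1 < ∑ a ∈ s, f a + #s) :
    ∃ a ∈ s, ∃ b ∈ s, a ≠ b ∧ f a = k ∧ f b = k := by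
  classical
  by_contra! h
  have hT : #(s.filter fun a => f a = k) ≤ 1 := card_le_one.2 fun a ha b hb => by
    by_contra hab
    exact h a (mem_filter.1 ha).1 b (mem_filter.1 hb).1 hab (mem_filter.1 ha).2 (mem_filter.1 hb).2
  have : ∑ a ∈ s, (f a + 1) ≤ ∑ a ∈ s, (k + if f a = k then 1 else 0) :=
    sum_le_sum fun a ha => by have := hf a ha; split_ifs <;> omega
  simp only [sum_add_distrib, sum_const, sum_boole, smul_eq_mul, mul_one, Nat.cast_id] at this
  omega

namespace Layout

variable {N : ℕ} (L : Layout N)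

def linesIn (d : ℤ × ℤ) : Finset (Fin N) := univ.filter fun i => L.d i = d

def pointsIn (d : ℤ × ℤ) : Finset (ℤ × ℤ) :=
  (L.linesIn d).biUnion fun i => segFinset (L.q i) (L.d i)

theorem d_eq_of_mem_linesIn {d : ℤ × ℤ} {i : Fin N} (hi : i ∈ L.linesIn d) : L.d i = d :=
  (mem_filter.1 hi).2

theorem sum_card_linesIn : ∑ d ∈ dirs, #(L.linesIn d) = N := by
  have := card_eq_sum_card_fiberwise (s := univ) fun i _ => mem_dirs.2 (L.d_mem i)
  rw [card_univ, Fintype.card_fin] at this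
  exact this.symm

theorem pairwiseDisjoint_linesIn (d : ℤ × ℤ) :
    (L.linesIn d : Set (Fin N)).PairwiseDisjoint fun i => segFinset (L.q i) (L.d i) := by
  intro i hi j hj hij
  rw [Function.onFun, ← disjoint_coe, coe_segFinset, coe_segFinset, Set.disjoint_iff_inter_eq_empty]
  exact L.disj i j hij (by rw [L.d_eq_of_mem_linesIn hi, L.d_eq_of_mem_linesIn hj])

theorem card_pointsIn (d : ℤ × ℤ) : #(L.pointsIn d) = 5 * #(L.linesIn d) := by
  rw [pointsIn, card_biUnion (L.pairwiseDisjoint_linesIn d),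
    sum_congr rfl fun i _ => card_segFinset _ (ne_zero_of_mem_Dir (L.d_mem i)), sum_const,
    smul_eq_mul, mul_comm]

theorem coe_pointsIn_subset_covered (d : ℤ × ℤ) : ↑(L.pointsIn d) ⊆ L.covered := by
  intro p hp
  obtain ⟨i, -, hpi⟩ := mem_biUnion.1 (mem_coe.1 hp)
  exact Set.mem_iUnion.2 ⟨i, by rw [← coe_segFinset]; exact hpi⟩

theorem covered_finite : L.covered.Finite :=
  Set.finite_iUnion fun i => coe_segFinset (L.q i) (L.d i) ▸ (segFinset _ _).finite_toSet

theorem card_le_ncard_covered {U : Finset (ℤ × ℤ)} (hU : ↑U ⊆ L.covered) :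
    #U ≤ L.covered.ncard := by
  rw [← Set.ncard_coe_finset]
  exact Set.ncard_le_ncard hU L.covered_finite

theorem five_mul_card_linesIn_le_ncard_covered (d : ℤ × ℤ) :
    5 * #(L.linesIn d) ≤ L.covered.ncard :=
  L.card_pointsIn d ▸ L.card_le_ncard_covered (L.coe_pointsIn_subset_covered d)

theorem card_linesIn_le_card_filter_pointsIn {w d : ℤ × ℤ} (h : (cross w d : ZMod 5) ≠ 0)
    (c : ZMod 5) :
    #(L.linesIn d) ≤ #((L.pointsIn d).filter fun p => (cross w p : ZMod 5) = c) := by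
  rw [pointsIn, filter_biUnion]
  refine card_le_card_biUnion ((L.pairwiseDisjoint_linesIn d).mono fun i => filter_subset _ _)
    fun i hi => ?_
  obtain ⟨p, hp, hpc⟩ :=
    exists_mem_segFinset_cross_eq (L.q i) (w := w) (L.d_eq_of_mem_linesIn hi ▸ h) c
  exact ⟨p, mem_filter.2 ⟨hp, hpc⟩⟩

theorem five_dvd_card_filter_pointsIn_self (w : ℤ × ℤ) (c : ZMod 5) :
    5 ∣ #((L.pointsIn w).filter fun p => (cross w p : ZMod 5) = c) := by
  rw [pointsIn, filter_biUnion,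
    card_biUnion ((L.pairwiseDisjoint_linesIn w).mono fun i => filter_subset _ _)]
  refine dvd_sum fun i hi => ?_
  have hconst : ∀ p ∈ segFinset (L.q i) (L.d i), cross w p = cross w (L.q i) :=
    fun p hp => cross_self_eq_of_mem_segFinset (L.d_eq_of_mem_linesIn hi ▸ hp)
  by_cases hq : (cross w (L.q i) : ZMod 5) = c
  · rw [filter_true_of_mem fun p hp => hconst p hp ▸ hq,
      card_segFinset _ (ne_zero_of_mem_Dir (L.d_mem i))]
  · rw [filter_false_of_mem fun p hp => hconst p hp ▸ hq, card_empty]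
    exact dvd_zero 5

theorem five_mul_add_four_le_ncard_covered {k : ℕ} (hk : k % 5 = 1) {d w : ℤ × ℤ}
    (hd : d ∈ Dir) (hw : w ∈ Dir) (hdw : d ≠ w) (hdk : #(L.linesIn d) = k)
    (hwk : #(L.linesIn w) = k) : 5 * k + 4 ≤ L.covered.ncard := by
  let φ : ℤ × ℤ → ZMod 5 := fun p => cross w p
  let U := L.pointsIn d ∪ L.pointsIn w
  have hU : #U = ∑ c, #(U.filter fun p => φ p = c) :=
    card_eq_sum_card_fiberwise fun p _ => mem_univ (φ p)
  have hW : #(L.pointsIn w) = ∑ c, #((L.pointsIn w).filter fun p => φ p = c) :=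
    card_eq_sum_card_fiberwise fun p _ => mem_univ (φ p)
  calc 5 * k + 4 ≤ #U := by
        rw [hU]
        refine five_mul_add_four_le_sum (ZMod.card 5) hk _ _ (fun c => ?_) (fun c => ?_)
          (L.five_dvd_card_filter_pointsIn_self w) (by rw [← hW, card_pointsIn, hwk])
        · exact hdk ▸ (L.card_linesIn_le_card_filter_pointsIn
            (cross_ne_zero_mod_five hd hw hdw) c).trans
            (card_le_card (filter_subset_filter _ subset_union_left))
        · exact card_le_card (filter_subset_filter _ subset_union_right)
    _ ≤ L.covered.ncard := L.card_le_ncard_covered (by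
        rw [coe_union]
        exact Set.union_subset (L.coe_pointsIn_subset_covered d) (L.coe_pointsIn_subset_covered w))

end Layout

theorem layout_covers_ceil_plus_four_general (N : ℕ) (h4 : N % 4 ≠ 1)
    (h5 : ((N + 3) / 4) % 5 = 1) (L : Layout N) :
    ((N + 3) / 4) * 5 + 4 ≤ L.covered.ncard := by
  set k := (N + 3) / 4
  by_cases hsmall : ∀ d, #(L.linesIn d) ≤ k
  · obtain ⟨d, hd, w, hw, hdw, hdk, hwk⟩ :=
      exists_ne_eq_of_le_of_sum dirs (fun d => #(L.linesIn d)) k (fun d _ => hsmall d)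
        (by rw [L.sum_card_linesIn, card_dirs]; omega)
    have := L.five_mul_add_four_le_ncard_covered h5 (mem_dirs.1 hd) (mem_dirs.1 hw) hdw hdk hwk
    omega
  · obtain ⟨d, hd⟩ := not_forall.1 hsmall
    have := L.five_mul_card_linesIn_le_ncard_covered d
    omega

/-- If `N ≢ 1 (mod 4)` and `⌈N/4⌉ ≡ 1 (mod 5)`, then every 5D-layout of `N`
lines covers at least `⌈N/4⌉ · 5 + 4` lattice points.
(Here `(N + 3) / 4` is the ceiling `⌈N/4⌉` in natural-number arithmetic.) -/
theorem layout_covers_ceil_plus_four (N : ℕ) (hpos : 0 < N) (h4 : N % 4 ≠ 1)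
    (h5 : ((N + 3) / 4) % 5 = 1) (L : Layout N) :
    ((N + 3) / 4) * 5 + 4 ≤ L.covered.ncard :=
  layout_covers_ceil_plus_four_general N h4 h5 L
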